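/- arXiv:2010.15148 — 2 statements merged into one kernel-verified Lean document; each statement's English description precedes it below -/
import Mathlib

section
/- For integers m₁, m₂, n₁, n₂, define f(α,β) = |m₁e^{iα} + m₂e^{-iα} + n₂e^{iβ} + n₁e^{-iβ}|² for real α, β. Then the minimum of f over all real α, β is strictly positive if and only if [(m₁+m₂)² − (n₁+n₂)²]·[(m₁−m₂)² − (n₁−n₂)²] > 0. -/
/-!
With `A = m₁ + m₂`, `B = n₁ + n₂`, `C = m₁ - m₂`, `D = n₂ - n₁` one has
`f(α, β) = (A cos α + B cos β)² + (C sin α + D sin β)²`, the squared distance between the point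
`(A cos α, C sin α)` of one ellipse and the point `(-B cos β, -D sin β)` of another. As `f` is
continuous on the torus, its minimum is positive iff it has no zero, i.e. iff the two ellipses do
not meet. In the squared coordinates `x = cos² α`, `y = cos² β` a common point is a solution in
`[0, 1]²` of the linear system `A² x = B² y`, `C² (1 - x) = D² (1 - y)`, and such a solution
exists iff `(A² - B²) (C² - D²) ≤ 0`.
-/

open Real Set

instance : CompactSpace Angle := @AddCircle.compactSpace _ ⟨two_pi_pos⟩

theorem lt_ciInf_iff_of_continuous {X α : Type*} [TopologicalSpace X] [CompactSpace X]
    [Nonempty X] [ConditionallyCompleteLinearOrder α] [TopologicalSpace α] [OrderClosedTopology α]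
    {g : X → α} (hg : Continuous g) {a : α} : a < ⨅ x, g x ↔ ∀ x, a < g x := by
  refine ⟨fun h x => h.trans_le (ciInf_le (isCompact_range hg).bddBelow x), fun h => ?_⟩
  obtain ⟨x₀, hx₀⟩ :=
    hg.exists_forall_le' (Classical.arbitrary X) (by simp [Filter.cocompact_eq_bot])
  exact (h x₀).trans_le (le_ciInf hx₀)

theorem exists_cos_sin_eq {c s : ℝ} (h : c ^ 2 + s ^ 2 = 1) : ∃ θ, cos θ = c ∧ sin θ = s := by
  have hz : ‖(⟨c, s⟩ : ℂ)‖ = 1 := by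
    rw [Complex.norm_def, Complex.normSq_mk, ← sqrt_one]; congr 1; linear_combination h
  refine ⟨Complex.arg ⟨c, s⟩, ?_, ?_⟩
  · rw [Complex.cos_arg (norm_ne_zero_iff.mp (hz ▸ one_ne_zero)), hz, div_one]
  · rw [Complex.sin_arg, hz, div_one]

theorem exists_sq_eq_and_add_mul_eq_zero {p b y : ℝ} (hy : 0 ≤ y) (h : p ^ 2 = b ^ 2 * y) :
    ∃ c, c ^ 2 = y ∧ p + b * c = 0 := by
  have h' : p ^ 2 = (b * √y) ^ 2 := by rw [mul_pow, sq_sqrt hy, h]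
  rcases sq_eq_sq_iff_eq_or_eq_neg.mp h' with h' | h'
  · exact ⟨-√y, by rw [neg_sq, sq_sqrt hy], by rw [h']; ring⟩
  · exact ⟨√y, sq_sqrt hy, by rw [h']; ring⟩

theorem exists_mem_Icc_of_le_of_le {a b c d : ℝ} (ha : 0 ≤ a) (hd : 0 ≤ d) (hab : a ≤ b)
    (hdc : d ≤ c) :
    ∃ x ∈ Icc (0 : ℝ) 1, ∃ y ∈ Icc (0 : ℝ) 1, a * x = b * y ∧ c * (1 - x) = d * (1 - y) := by
  rcases hab.eq_or_lt with rfl | hab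
  · exact ⟨1, right_mem_Icc.2 zero_le_one, 1, right_mem_Icc.2 zero_le_one, rfl, by ring⟩
  rcases hdc.eq_or_lt with rfl | hdc
  · exact ⟨0, left_mem_Icc.2 zero_le_one, 0, left_mem_Icc.2 zero_le_one, by ring, rfl⟩
  -- Cramer's rule; `b * c - a * d = b * (c - d) + d * (b - a) > 0`.
  have hΔ : 0 < b * c - a * d := by nlinarith
  have hΔ' := hΔ.ne'
  refine ⟨b * (c - d) / (b * c - a * d), ⟨div_nonneg (by nlinarith) hΔ.le, ?_⟩,
    a * (c - d) / (b * c - a * d), ⟨div_nonneg (by nlinarith) hΔ.le, ?_⟩,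
    by field_simp, ?_⟩
  · rw [div_le_one hΔ]; nlinarith
  · rw [div_le_one hΔ]; nlinarith
  · rw [one_sub_div hΔ', one_sub_div hΔ', mul_div_assoc', mul_div_assoc']; congr 1; ring

theorem mul_one_sub_ne_of_lt_of_lt {a b c d x y : ℝ} (hb : 0 ≤ b) (hd : 0 ≤ d) (hba : b < a)
    (hdc : d < c) (hy : y ∈ Icc (0 : ℝ) 1) (h₁ : a * x = b * y) :
    c * (1 - x) ≠ d * (1 - y) := by
  intro h₂
  have hP : 0 < c * (a - b) := mul_pos (by linarith) (by linarith)
  have hQ : 0 < a * (c - d) := mul_pos (by linarith) (by linarith)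
  have key : c * (a - b) * y + a * (c - d) * (1 - y) = 0 := by
    linear_combination c * h₁ + a * h₂
  rcases hy.1.eq_or_lt with rfl | hy₀
  · linarith
  · nlinarith [mul_pos hP hy₀, mul_nonneg hQ.le (sub_nonneg.2 hy.2)]

theorem exists_mem_Icc_mul_eq_mul_iff {a b c d : ℝ} (ha : 0 ≤ a) (hb : 0 ≤ b) (hc : 0 ≤ c)
    (hd : 0 ≤ d) :
    (∃ x ∈ Icc (0 : ℝ) 1, ∃ y ∈ Icc (0 : ℝ) 1, a * x = b * y ∧ c * (1 - x) = d * (1 - y)) ↔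
      (a - b) * (c - d) ≤ 0 := by
  constructor
  · rintro ⟨x, hx, y, hy, h₁, h₂⟩
    by_contra! h
    rcases pos_and_pos_or_neg_and_neg_of_mul_pos h with ⟨h₃, h₄⟩ | ⟨h₃, h₄⟩
    · exact mul_one_sub_ne_of_lt_of_lt hb hd (by linarith) (by linarith) hy h₁ h₂
    · exact mul_one_sub_ne_of_lt_of_lt ha hc (by linarith) (by linarith) hx h₁.symm h₂.symm
  · intro h
    rcases mul_nonpos_iff.mp h with ⟨h₁, h₂⟩ | ⟨h₁, h₂⟩
    · obtain ⟨x, hx, y, hy, e₁, e₂⟩ :=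
        exists_mem_Icc_of_le_of_le (a := b) (b := a) (c := d) (d := c) hb hc
          (by linarith) (by linarith)
      exact ⟨y, hy, x, hx, e₁.symm, e₂.symm⟩
    · exact exists_mem_Icc_of_le_of_le ha hd (by linarith) (by linarith)

theorem exists_mul_cos_add_mul_cos_eq_zero_iff (A B C D : ℝ) :
    (∃ α β : ℝ, A * cos α + B * cos β = 0 ∧ C * sin α + D * sin β = 0) ↔
      (A ^ 2 - B ^ 2) * (C ^ 2 - D ^ 2) ≤ 0 := by
  rw [← exists_mem_Icc_mul_eq_mul_iff (sq_nonneg A) (sq_nonneg B) (sq_nonneg C) (sq_nonneg D)]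
  constructor
  · rintro ⟨α, β, h₁, h₂⟩
    refine ⟨cos α ^ 2, ⟨sq_nonneg _, cos_sq_le_one α⟩, cos β ^ 2, ⟨sq_nonneg _, cos_sq_le_one β⟩,
      by linear_combination (A * cos α - B * cos β) * h₁, ?_⟩
    rw [← sin_sq, ← sin_sq]
    linear_combination (C * sin α - D * sin β) * h₂
  · rintro ⟨x, hx, y, hy, h₁, h₂⟩
    obtain ⟨α, hcα, hsα⟩ := exists_cos_sin_eq (c := √x) (s := √(1 - x)) (by
      rw [sq_sqrt hx.1, sq_sqrt (sub_nonneg.2 hx.2)]; ring)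
    obtain ⟨c, hc, hc₀⟩ := exists_sq_eq_and_add_mul_eq_zero (p := A * cos α) (b := B) hy.1 (by
      rw [mul_pow, hcα, sq_sqrt hx.1, h₁])
    obtain ⟨s, hs, hs₀⟩ := exists_sq_eq_and_add_mul_eq_zero (p := C * sin α) (b := D)
      (sub_nonneg.2 hy.2) (by rw [mul_pow, hsα, sq_sqrt (sub_nonneg.2 hx.2), h₂])
    obtain ⟨β, rfl, rfl⟩ := exists_cos_sin_eq (c := c) (s := s) (by rw [hc, hs]; ring)
    exact ⟨α, β, hc₀, hs₀⟩

theorem norm_sq_exp_combination (m₁ m₂ n₁ n₂ α β : ℝ) :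
    ‖(m₁ : ℂ) * Complex.exp (Complex.I * α) + (m₂ : ℂ) * Complex.exp (-(Complex.I * α))
        + (n₂ : ℂ) * Complex.exp (Complex.I * β) + (n₁ : ℂ) * Complex.exp (-(Complex.I * β))‖ ^ 2 =
      ((m₁ + m₂) * cos α + (n₁ + n₂) * cos β) ^ 2
        + ((m₁ - m₂) * sin α + (n₂ - n₁) * sin β) ^ 2 := by
  rw [Complex.sq_norm, ← Complex.normSq_add_mul_I]
  congr 1
  apply Complex.ext <;>
    simp [Complex.exp_re, Complex.exp_im, Complex.cos_ofReal_re, Complex.sin_ofReal_re] <;> ring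

theorem stmt_0 (m₁ m₂ n₁ n₂ : ℤ) :
    (0 < ⨅ p : ℝ × ℝ,
      ‖(m₁ : ℂ) * Complex.exp (Complex.I * (p.1 : ℂ))
        + (m₂ : ℂ) * Complex.exp (-(Complex.I * (p.1 : ℂ)))
        + (n₂ : ℂ) * Complex.exp (Complex.I * (p.2 : ℂ))
        + (n₁ : ℂ) * Complex.exp (-(Complex.I * (p.2 : ℂ)))‖ ^ 2) ↔
    ((m₁ + m₂) ^ 2 - (n₁ + n₂) ^ 2) * ((m₁ - m₂) ^ 2 - (n₁ - n₂) ^ 2) > 0 := by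
  set A : ℝ := m₁ + m₂
  set B : ℝ := n₁ + n₂
  set C : ℝ := m₁ - m₂
  set D : ℝ := n₂ - n₁
  let G : Angle × Angle → ℝ := fun θ =>
    (A * θ.1.cos + B * θ.2.cos) ^ 2 + (C * θ.1.sin + D * θ.2.sin) ^ 2
  have hG : Continuous G := by
    have := Angle.continuous_cos; have := Angle.continuous_sin; fun_prop
  have hsurj : Function.Surjective (Prod.map ((↑) : ℝ → Angle) ((↑) : ℝ → Angle)) :=
    Prod.map_surjective.2 ⟨QuotientAddGroup.mk_surjective, QuotientAddGroup.mk_surjective⟩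
  have hf : ∀ p : ℝ × ℝ, ‖(m₁ : ℂ) * Complex.exp (Complex.I * (p.1 : ℂ))
        + (m₂ : ℂ) * Complex.exp (-(Complex.I * (p.1 : ℂ)))
        + (n₂ : ℂ) * Complex.exp (Complex.I * (p.2 : ℂ))
        + (n₁ : ℂ) * Complex.exp (-(Complex.I * (p.2 : ℂ)))‖ ^ 2 = G (Prod.map (↑) (↑) p) := by
    intro p
    simpa [G, Angle.cos_coe, Angle.sin_coe] using norm_sq_exp_combination m₁ m₂ n₁ n₂ p.1 p.2
  have hcast : ((((m₁ + m₂) ^ 2 - (n₁ + n₂) ^ 2) * ((m₁ - m₂) ^ 2 - (n₁ - n₂) ^ 2) : ℤ) : ℝ)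
      = (A ^ 2 - B ^ 2) * (C ^ 2 - D ^ 2) := by
    push_cast; ring
  rw [iInf_congr hf, hsurj.iInf_comp G, lt_ciInf_iff_of_continuous hG, hsurj.forall, gt_iff_lt,
    ← Int.cast_pos (R := ℝ), hcast, ← not_le, ← exists_mul_cos_add_mul_cos_eq_zero_iff]
  have hpos : ∀ X Y : ℝ, 0 < X ^ 2 + Y ^ 2 ↔ ¬(X = 0 ∧ Y = 0) := fun X Y => by
    rw [(by positivity : 0 ≤ X ^ 2 + Y ^ 2).lt_iff_ne', ne_eq,
      add_eq_zero_iff_of_nonneg (sq_nonneg X) (sq_nonneg Y), sq_eq_zero_iff, sq_eq_zero_iff]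
  simp only [G, Prod.forall, Prod.map, Angle.cos_coe, Angle.sin_coe, hpos, not_exists]
end

section
/- In the polynomial ring ℤ[y, z], the quotient ℤ[y, z]/⟨y + z + n, y + z + yz⟩ is, as a ℤ-module, free with basis given by the images of 1 and z; equivalently, every element has a unique representative of the form a + b z with a, b ∈ ℤ. -/
open MvPolynomial in
theorem stmt_14 (n : ℤ)
    (I : Ideal (MvPolynomial (Fin 2) ℤ))
    (hI : I = Ideal.span {X 0 + X 1 + C n, X 0 + X 1 + X 0 * X 1}) :
    ∀ f : MvPolynomial (Fin 2) ℤ,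
      ∃! ab : ℤ × ℤ,
        Ideal.Quotient.mk I f = Ideal.Quotient.mk I (C ab.1 + C ab.2 * X 1) := by
  intro f
  set mk := Ideal.Quotient.mk I with hmk
  -- key congruences
  have hmem : ∀ g : MvPolynomial (Fin 2) ℤ, (∃ c d : MvPolynomial (Fin 2) ℤ,
      c * (MvPolynomial.X 0 + MvPolynomial.X 1 + MvPolynomial.C n) +
      d * (MvPolynomial.X 0 + MvPolynomial.X 1 + MvPolynomial.X 0 * MvPolynomial.X 1) = g) → g ∈ I := by
    intro g hg
    rw [hI]
    exact (Ideal.mem_span_pair).2 hg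
  have h1 : mk (MvPolynomial.X 0) = mk (- MvPolynomial.C n - MvPolynomial.X 1) := by
    rw [Ideal.Quotient.mk_eq_mk_iff_sub_mem]
    exact hmem _ ⟨1, 0, by ring⟩
  have h2 : mk (MvPolynomial.X 1 ^ 2) = mk (- MvPolynomial.C n * MvPolynomial.X 1 - MvPolynomial.C n) := by
    rw [Ideal.Quotient.mk_eq_mk_iff_sub_mem]
    exact hmem _ ⟨MvPolynomial.X 1 + 1, -1, by ring⟩
  -- existence
  have hex : ∃ a b : ℤ, mk f = mk (MvPolynomial.C a + MvPolynomial.C b * MvPolynomial.X 1) := by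
    induction f using MvPolynomial.induction_on with
    | C a => exact ⟨a, 0, by simp⟩
    | add p q hp hq =>
        obtain ⟨a, b, hp⟩ := hp
        obtain ⟨c, d, hq⟩ := hq
        refine ⟨a + c, b + d, ?_⟩
        rw [map_add, hp, hq, ← map_add]
        congr 1
        push_cast [MvPolynomial.C_add]
        ring
    | mul_X p i hp =>
        obtain ⟨a, b, hp⟩ := hp
        fin_cases i <;> simp only [Fin.zero_eta, Fin.mk_one]
        all_goals simp only [map_pow, map_mul, map_neg, map_sub, map_add] at h1 h2
        · refine ⟨n * b - n * a, -a, ?_⟩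
          simp only [MvPolynomial.C_sub, MvPolynomial.C_mul, MvPolynomial.C_neg]
          simp only [map_mul, map_sub, map_add, map_neg]
          rw [hp]
          simp only [map_mul, map_sub, map_add, map_neg]
          linear_combination (mk (MvPolynomial.C a) + mk (MvPolynomial.C b) * mk (MvPolynomial.X 1)) * h1
            + (- mk (MvPolynomial.C b)) * h2
        · refine ⟨-n * b, a - n * b, ?_⟩
          simp only [MvPolynomial.C_sub, MvPolynomial.C_mul, MvPolynomial.C_neg]
          simp only [map_mul, map_sub, map_add, map_neg]
          rw [hp]
          simp only [map_mul, map_sub, map_add, map_neg]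
          linear_combination (mk (MvPolynomial.C b)) * h2
  -- uniqueness setup: map to AdjoinRoot
  obtain ⟨a, b, hab⟩ := hex
  refine ⟨(a, b), hab, ?_⟩
  rintro ⟨a', b'⟩ hab'
  set p : Polynomial ℤ := Polynomial.X ^ 2 + Polynomial.C n * Polynomial.X + Polynomial.C n with hp
  have hpm : p.Monic := by unfold p; monicity!
  set A := AdjoinRoot p
  set r : A := AdjoinRoot.root p with hr
  have hroot : r ^ 2 + (n : A) * r + (n : A) = 0 := by
    have h := AdjoinRoot.eval₂_root p
    rw [hp] at h
    simp only [Polynomial.eval₂_add, Polynomial.eval₂_mul, Polynomial.eval₂_pow,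
      Polynomial.eval₂_C, Polynomial.eval₂_X] at h
    simpa only [eq_intCast] using h
  set φ : MvPolynomial (Fin 2) ℤ →+* A :=
    (MvPolynomial.aeval ![-(n : A) - r, r]).toRingHom with hφ
  have hker : I ≤ RingHom.ker φ := by
    rw [hI, Ideal.span_le]
    rintro x hx
    simp only [Set.mem_insert_iff, Set.mem_singleton_iff] at hx
    rcases hx with rfl | rfl <;>
      rw [SetLike.mem_coe, RingHom.mem_ker] <;>
      simp only [hφ, AlgHom.toRingHom_eq_coe, RingHom.coe_coe, map_add, map_mul,
        MvPolynomial.aeval_X, MvPolynomial.aeval_C, Matrix.cons_val_zero, Matrix.cons_val_one,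
        Matrix.head_cons]
    all_goals try simp only [algebraMap_int_eq, eq_intCast, map_intCast]
    · ring
    · linear_combination -hroot
  have key : φ (MvPolynomial.C a + MvPolynomial.C b * MvPolynomial.X 1)
      = φ (MvPolynomial.C a' + MvPolynomial.C b' * MvPolynomial.X 1) := by
    have : mk (MvPolynomial.C a + MvPolynomial.C b * MvPolynomial.X 1)
        = mk (MvPolynomial.C a' + MvPolynomial.C b' * MvPolynomial.X 1) := by
      rw [← hab, ← hab']
    rw [Ideal.Quotient.mk_eq_mk_iff_sub_mem] at this
    have := hker this
    rw [RingHom.mem_ker, map_sub, sub_eq_zero] at this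
    exact this
  -- evaluate
  have key2 : (a' : A) + (b' : A) * r = (a : A) + (b : A) * r := by
    simpa [hφ, MvPolynomial.aeval_C, algebraMap_int_eq, eq_intCast] using key.symm
  -- now use AdjoinRoot.mk structure
  have hcast : ∀ m : ℤ, (m : A) = AdjoinRoot.mk p (Polynomial.C m) := fun m =>
    (eq_intCast ((AdjoinRoot.mk p).comp Polynomial.C) m).symm
  have hrm : r = AdjoinRoot.mk p Polynomial.X := rfl
  rw [hcast a, hcast b, hcast a', hcast b', hrm, ← map_mul, ← map_mul, ← map_add, ← map_add,
    AdjoinRoot.mk_eq_mk] at key2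
  have hdvd : p ∣ Polynomial.C (a' - a) + Polynomial.C (b' - b) * Polynomial.X := by
    have heq : (Polynomial.C a' + Polynomial.C b' * Polynomial.X)
        - (Polynomial.C a + Polynomial.C b * Polynomial.X)
        = Polynomial.C (a' - a) + Polynomial.C (b' - b) * Polynomial.X := by
      rw [Polynomial.C_sub, Polynomial.C_sub]; ring
    rw [heq] at key2
    exact key2
  have hz : Polynomial.C (a' - a) + Polynomial.C (b' - b) * Polynomial.X = 0 := by
    refine Polynomial.eq_zero_of_dvd_of_degree_lt hdvd ?_
    have hdp : p.degree = 2 := by unfold p; compute_degree!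
    calc (Polynomial.C (a' - a) + Polynomial.C (b' - b) * Polynomial.X).degree
        ≤ 1 := by compute_degree
      _ < p.degree := by rw [hdp]; norm_num
  have h0 := congrArg (fun q => Polynomial.coeff q 0) hz
  have h1' := congrArg (fun q => Polynomial.coeff q 1) hz
  simp only [Polynomial.coeff_add, Polynomial.coeff_C_mul, Polynomial.coeff_X_one,
    Polynomial.coeff_X_zero, Polynomial.coeff_C, Polynomial.coeff_zero, if_pos rfl,
    one_ne_zero, if_false, mul_zero, mul_one, add_zero, zero_add] at h0 h1'
  simp at h0
  have ha : a' = a := by omega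
  have hb : b' = b := by omega
  simp [Prod.ext_iff, ha, hb]
end
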